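/- Eigenvalue lower bound for the symmetric part of the transition matrix: for every x ∈ ℝ³ with ‖x‖₂ ≤ π and every z ∈ ℝ³, zᵀ L_x z = zᵀ L¹_x z ≥ c(‖x‖₂)·‖z‖₂², where c(θ) = sinc(θ)/sinc²(θ/2). -/

import Mathlib

/-!
The skew part `hatm x / 2` of `Lₓ` contributes nothing to the quadratic form, and
`L¹ₓ = c I₃ + (1 - c) x xᵀ / ‖x‖²` with `c = c(‖x‖)`, so
`zᵀ L¹ₓ z = c ‖z‖² + (1 - c) (x ⬝ z)² / ‖x‖² ≥ c ‖z‖²` as soon as `c ≤ 1`.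
Finally `c(θ) = (θ/2) cot (θ/2)`, which is at most `1` on `(0, π]` because `t ≤ tan t` on `[0, π/2)`.
-/

open Matrix Real

noncomputable section

/-- The skew-symmetric "hat" matrix of a vector in ℝ³. -/
def hatm (p : Fin 3 → ℝ) : Matrix (Fin 3) (Fin 3) ℝ :=
  !![0, -p 2, p 1; p 2, 0, -p 0; -p 1, p 0, 0]

/-- The Euclidean (ℓ²) norm on ℝ³. -/
def norm2 (p : Fin 3 → ℝ) : ℝ := Real.sqrt (∑ i, p i ^ 2)

/-- The unnormalized sinc function: α · sinc α = sin α, sinc 0 = 1. -/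
def sinc (α : ℝ) : ℝ := if α = 0 then 1 else Real.sin α / α

/-- c(θ) = sinc(θ)/sinc²(θ/2). -/
def cfun (θ : ℝ) : ℝ := _root_.sinc θ / _root_.sinc (θ / 2) ^ 2

/-- The symmetric part L¹ₓ of the transition matrix (L¹₀ := I₃). -/
def L1mat (x : Fin 3 → ℝ) : Matrix (Fin 3) (Fin 3) ℝ :=
  if x = 0 then 1 else
    cfun (norm2 x) • (1 : Matrix (Fin 3) (Fin 3) ℝ)
      + ((1 - cfun (norm2 x)) / norm2 x ^ 2) • vecMulVec x x

/-- The transition matrix Lₓ of the axis-angle kinematics (L₀ := I₃). -/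
def Lmat (x : Fin 3 → ℝ) : Matrix (Fin 3) (Fin 3) ℝ :=
  if x = 0 then 1 else
    cfun (norm2 x) • (1 : Matrix (Fin 3) (Fin 3) ℝ)
      + ((1 - cfun (norm2 x)) / norm2 x ^ 2) • vecMulVec x x
      + (1 / 2 : ℝ) • hatm x

theorem Matrix.dotProduct_mulVec_self_eq_zero_of_transpose_eq_neg {n R : Type*} [Fintype n]
    [CommRing R] [NoZeroDivisors R] [CharZero R] {A : Matrix n n R} (hA : Aᵀ = -A)
    (z : n → R) : z ⬝ᵥ A *ᵥ z = 0 := by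
  refine CharZero.eq_neg_self_iff.mp ?_
  calc z ⬝ᵥ A *ᵥ z = Aᵀ *ᵥ z ⬝ᵥ z := by rw [dotProduct_mulVec, mulVec_transpose]
    _ = -(z ⬝ᵥ A *ᵥ z) := by rw [hA, neg_mulVec, neg_dotProduct, dotProduct_comm]

theorem Matrix.dotProduct_mulVec_smul_one_add_smul_vecMulVec {n R : Type*} [Fintype n]
    [DecidableEq n] [CommRing R] (a b : R) (x z : n → R) :
    z ⬝ᵥ (a • 1 + b • vecMulVec x x) *ᵥ z = a * (z ⬝ᵥ z) + b * (x ⬝ᵥ z) ^ 2 := by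
  rw [add_mulVec, smul_mulVec, smul_mulVec, one_mulVec, vecMulVec_mulVec]
  simp [dotProduct_add, dotProduct_smul, dotProduct_comm z x, sq]

lemma mul_cos_le_sin {t : ℝ} (h0 : 0 ≤ t) (h1 : t ≤ π / 2) : t * cos t ≤ sin t := by
  rcases h1.lt_or_eq with h1 | rfl
  · have hcos : 0 < cos t := cos_pos_of_mem_Ioo ⟨by linarith [pi_pos], h1⟩
    simpa [tan_eq_sin_div_cos, le_div_iff₀ hcos] using le_tan h0 h1
  · simp

lemma cfun_zero : cfun 0 = 1 := by simp [cfun, _root_.sinc]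

lemma cfun_eq_of_sin_half_ne_zero {θ : ℝ} (h : sin (θ / 2) ≠ 0) :
    cfun θ = θ * cos (θ / 2) / (2 * sin (θ / 2)) := by
  have hθ : θ ≠ 0 := by rintro rfl; simp at h
  have hsin : sin θ = 2 * sin (θ / 2) * cos (θ / 2) := by rw [← sin_two_mul]; ring_nf
  rw [cfun, _root_.sinc, _root_.sinc, if_neg hθ, if_neg (div_ne_zero hθ two_ne_zero), hsin]
  field_simp

lemma cfun_le_one {θ : ℝ} (h0 : 0 ≤ θ) (hπ : θ ≤ π) : cfun θ ≤ 1 := by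
  rcases h0.eq_or_lt with rfl | h0
  · rw [cfun_zero]
  have hsin : 0 < sin (θ / 2) := sin_pos_of_pos_of_lt_pi (by linarith) (by linarith [pi_pos])
  rw [cfun_eq_of_sin_half_ne_zero hsin.ne', div_le_one (by positivity)]
  linarith [mul_cos_le_sin (t := θ / 2) (by linarith) (by linarith)]

lemma norm2_nonneg (p : Fin 3 → ℝ) : 0 ≤ norm2 p := sqrt_nonneg _

lemma norm2_sq (p : Fin 3 → ℝ) : norm2 p ^ 2 = p ⬝ᵥ p := by
  rw [norm2, sq_sqrt (by positivity), dotProduct]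
  simp [sq]

lemma hatm_zero : hatm 0 = 0 := by
  ext i j; fin_cases i <;> fin_cases j <;> simp [hatm]

lemma hatm_transpose (p : Fin 3 → ℝ) : (hatm p)ᵀ = -hatm p := by
  ext i j; fin_cases i <;> fin_cases j <;> simp [hatm]

-- At `x = 0` the right-hand side is `c(0) • 1 + 0 = 1`, so the case split in `L1mat` disappears.
lemma L1mat_eq_smul_one_add_smul_vecMulVec (x : Fin 3 → ℝ) :
    L1mat x = cfun (norm2 x) • (1 : Matrix (Fin 3) (Fin 3) ℝ)
      + ((1 - cfun (norm2 x)) / norm2 x ^ 2) • vecMulVec x x := by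
  rw [L1mat]
  split_ifs with hx
  · simp [hx, norm2, cfun_zero]
  · rfl

lemma Lmat_eq_L1mat_add_half_smul_hatm (x : Fin 3 → ℝ) :
    Lmat x = L1mat x + (1 / 2 : ℝ) • hatm x := by
  rw [Lmat, L1mat]
  split_ifs with hx
  · simp [hx, hatm_zero]
  · rfl

lemma dotProduct_Lmat_mulVec_eq_L1mat (x z : Fin 3 → ℝ) :
    z ⬝ᵥ Lmat x *ᵥ z = z ⬝ᵥ L1mat x *ᵥ z := by
  rw [Lmat_eq_L1mat_add_half_smul_hatm, add_mulVec, dotProduct_add, smul_mulVec, dotProduct_smul,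
    dotProduct_mulVec_self_eq_zero_of_transpose_eq_neg (hatm_transpose x), smul_zero, add_zero]

/-- eigenvalue lower bound for the symmetric part of the
transition matrix. -/
theorem transition_matrix_quadratic_lower_bound (x z : Fin 3 → ℝ)
    (hx : norm2 x ≤ Real.pi) :
    z ⬝ᵥ (Lmat x).mulVec z = z ⬝ᵥ (L1mat x).mulVec z ∧
    cfun (norm2 x) * norm2 z ^ 2 ≤ z ⬝ᵥ (Lmat x).mulVec z := by
  refine ⟨dotProduct_Lmat_mulVec_eq_L1mat x z, ?_⟩
  have hc : cfun (norm2 x) ≤ 1 := cfun_le_one (norm2_nonneg x) hx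
  have hrank_one : 0 ≤ (1 - cfun (norm2 x)) / norm2 x ^ 2 * (x ⬝ᵥ z) ^ 2 :=
    mul_nonneg (div_nonneg (sub_nonneg.mpr hc) (sq_nonneg _)) (sq_nonneg _)
  rw [dotProduct_Lmat_mulVec_eq_L1mat, L1mat_eq_smul_one_add_smul_vecMulVec,
    Matrix.dotProduct_mulVec_smul_one_add_smul_vecMulVec, norm2_sq]
  linarith
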